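/- arXiv:math/0412304 — 2 statements merged into one kernel-verified Lean document; each statement's English description precedes it below -/
import Mathlib

section
/- For every m >= 1, the subalgebra R_m of the product ring k[x] x k[x] generated by u = (x,x) and v = (x^m,0) is isomorphic as a k-algebra to k[U,V]/(V^2 - U^m V); that is, R_m is the coordinate ring of the one-dimensional A_{2m-1}-singularity. -/
/-!
STATEMENT 15: For every `m ≥ 1`, the subalgebra `R_m` of `k[x] × k[x]` generated by
`u = (x,x)` and `v = (x^m, 0)` is isomorphic as a `k`-algebra to `k[U,V]/(V² - Uᵐ V)`,
i.e. `R_m` is the coordinate ring of the one-dimensional `A_{2m-1}`-singularity.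
-/

noncomputable section RMaux

variable (k : Type) [Field k] (m : ℕ)

private def Ik : Ideal (MvPolynomial (Fin 2) k) :=
  Ideal.span {(MvPolynomial.X 1 : MvPolynomial (Fin 2) k) ^ 2 -
    MvPolynomial.X 0 ^ m * MvPolynomial.X 1}

private lemma rep_exists (p : MvPolynomial (Fin 2) k) :
    ∃ a b : Polynomial k,
      p - (Polynomial.aeval (MvPolynomial.X 0) a
        + Polynomial.aeval (MvPolynomial.X 0) b * MvPolynomial.X 1) ∈ Ik k m := by
  induction p using MvPolynomial.induction_on with
  | C r => exact ⟨Polynomial.C r, 0, by simp [Ik]⟩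
  | add p q hp hq =>
      obtain ⟨a, b, hp⟩ := hp
      obtain ⟨a', b', hq⟩ := hq
      refine ⟨a + a', b + b', ?_⟩
      rw [map_add, map_add]
      have h : p + q - (Polynomial.aeval (MvPolynomial.X 0) a
            + Polynomial.aeval (MvPolynomial.X 0) a'
            + (Polynomial.aeval (MvPolynomial.X 0) b
              + Polynomial.aeval (MvPolynomial.X 0) b') * MvPolynomial.X 1)
          = (p - (Polynomial.aeval (MvPolynomial.X 0) a
              + Polynomial.aeval (MvPolynomial.X 0) b * MvPolynomial.X 1))
            + (q - (Polynomial.aeval (MvPolynomial.X 0) a'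
              + Polynomial.aeval (MvPolynomial.X 0) b' * MvPolynomial.X 1)) := by ring
      rw [h]
      exact add_mem hp hq
  | mul_X p i hp =>
      obtain ⟨a, b, hp⟩ := hp
      fin_cases i
      · refine ⟨a * Polynomial.X, b * Polynomial.X, ?_⟩
        rw [map_mul, map_mul, Polynomial.aeval_X]
        show p * MvPolynomial.X 0 - _ ∈ Ik k m
        have h : p * MvPolynomial.X 0
              - (Polynomial.aeval (MvPolynomial.X 0) a * MvPolynomial.X 0
                + Polynomial.aeval (MvPolynomial.X 0) b * MvPolynomial.X 0 * MvPolynomial.X 1)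
            = (p - (Polynomial.aeval (MvPolynomial.X 0) a
                + Polynomial.aeval (MvPolynomial.X 0) b * MvPolynomial.X 1))
              * MvPolynomial.X 0 := by ring
        rw [h]
        exact Ideal.mul_mem_right _ _ hp
      · refine ⟨0, a + b * Polynomial.X ^ m, ?_⟩
        rw [map_add, map_mul, map_pow, Polynomial.aeval_X, map_zero]
        show p * MvPolynomial.X 1 - _ ∈ Ik k m
        have h : p * MvPolynomial.X 1
              - (0 + (Polynomial.aeval (MvPolynomial.X 0) a
                + Polynomial.aeval (MvPolynomial.X 0) b * MvPolynomial.X 0 ^ m)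
                  * MvPolynomial.X 1)
            = (p - (Polynomial.aeval (MvPolynomial.X 0) a
                + Polynomial.aeval (MvPolynomial.X 0) b * MvPolynomial.X 1))
              * MvPolynomial.X 1
              + Polynomial.aeval (MvPolynomial.X 0) b
                * (MvPolynomial.X 1 ^ 2 - MvPolynomial.X 0 ^ m * MvPolynomial.X 1) := by ring
        rw [h]
        exact add_mem (Ideal.mul_mem_right _ _ hp)
          (Ideal.mul_mem_left _ _ (Ideal.subset_span (Set.mem_singleton _)))

private def phiRM : MvPolynomial (Fin 2) k →ₐ[k] Polynomial k × Polynomial k :=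
  MvPolynomial.aeval
    ![((Polynomial.X : Polynomial k), (Polynomial.X : Polynomial k)),
      ((Polynomial.X : Polynomial k) ^ m, 0)]

private lemma aeval_pair (a : Polynomial k) (p q : Polynomial k) :
    Polynomial.aeval ((p, q) : Polynomial k × Polynomial k) a
      = (Polynomial.aeval p a, Polynomial.aeval q a) := by
  have h1 := Polynomial.aeval_algHom_apply (AlgHom.fst k (Polynomial k) (Polynomial k)) (p, q) a
  have h2 := Polynomial.aeval_algHom_apply (AlgHom.snd k (Polynomial k) (Polynomial k)) (p, q) a
  exact Prod.ext (by simpa using h1.symm) (by simpa using h2.symm)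

private lemma Ik_le_ker : Ik k m ≤ RingHom.ker (phiRM k m) := by
  rw [Ik, Ideal.span_le]
  rintro x rfl
  simp only [SetLike.mem_coe, RingHom.mem_ker, phiRM, map_sub, map_pow, map_mul,
    MvPolynomial.aeval_X, Matrix.cons_val_zero, Matrix.cons_val_one, Matrix.head_cons]
  ext <;> simp [sq, ← pow_add]

private lemma ker_phiRM : RingHom.ker (phiRM k m) = Ik k m := by
  refine le_antisymm ?_ (Ik_le_ker k m)
  intro p hp
  obtain ⟨a, b, hab⟩ := rep_exists k m p
  have hmem := Ik_le_ker k m hab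
  rw [RingHom.mem_ker] at hp hmem
  rw [map_sub, hp, zero_sub, neg_eq_zero] at hmem
  have hX0 : phiRM k m (MvPolynomial.X 0)
      = ((Polynomial.X : Polynomial k), (Polynomial.X : Polynomial k)) := by
    simp [phiRM]
  have hX1 : phiRM k m (MvPolynomial.X 1)
      = ((Polynomial.X : Polynomial k) ^ m, 0) := by
    simp [phiRM]
  have hA : phiRM k m (Polynomial.aeval (MvPolynomial.X 0) a) = (a, a) := by
    rw [← Polynomial.aeval_algHom_apply, hX0, aeval_pair,
      Polynomial.aeval_X_left_apply]
  have hB : phiRM k m (Polynomial.aeval (MvPolynomial.X 0) b) = (b, b) := by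
    rw [← Polynomial.aeval_algHom_apply, hX0, aeval_pair,
      Polynomial.aeval_X_left_apply]
  rw [map_add, map_mul, hA, hB, hX1] at hmem
  have h1 : a + b * Polynomial.X ^ m = 0 := congrArg Prod.fst hmem
  have h2 : a = 0 := by simpa using congrArg Prod.snd hmem
  rw [h2, zero_add] at h1
  have h3 : b = 0 := by
    rcases mul_eq_zero.mp h1 with h | h
    · exact h
    · exact absurd h (pow_ne_zero _ Polynomial.X_ne_zero)
  rw [h2, h3] at hab
  simpa using hab

private lemma range_phiRM :
    (phiRM k m).range
      = Algebra.adjoin k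
          ({((Polynomial.X : Polynomial k), (Polynomial.X : Polynomial k)),
            ((Polynomial.X : Polynomial k) ^ m, 0)} : Set (Polynomial k × Polynomial k)) := by
  rw [phiRM, ← Algebra.adjoin_range_eq_range_aeval]
  congr 1
  ext x
  simp [Fin.exists_fin_two, eq_comm, or_comm]

end RMaux

theorem rm_iso_a2m1_singularity (k : Type) [Field k] (m : ℕ) (hm : 1 ≤ m) :
    Nonempty
      ((MvPolynomial (Fin 2) k ⧸
          Ideal.span {(MvPolynomial.X 1 : MvPolynomial (Fin 2) k) ^ 2 -
            MvPolynomial.X 0 ^ m * MvPolynomial.X 1}) ≃ₐ[k]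
        Algebra.adjoin k
          ({((Polynomial.X : Polynomial k), (Polynomial.X : Polynomial k)),
            ((Polynomial.X : Polynomial k) ^ m, 0)} : Set (Polynomial k × Polynomial k))) := by
  refine ⟨?_⟩
  have e1 : (MvPolynomial (Fin 2) k ⧸
        Ideal.span {(MvPolynomial.X 1 : MvPolynomial (Fin 2) k) ^ 2 -
          MvPolynomial.X 0 ^ m * MvPolynomial.X 1})
      ≃ₐ[k] MvPolynomial (Fin 2) k ⧸ RingHom.ker ((phiRM k m).rangeRestrict) :=
    Ideal.quotientEquivAlgOfEq k (by rw [AlgHom.ker_rangeRestrict, ker_phiRM]; rfl)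
  have e2 : (MvPolynomial (Fin 2) k ⧸ RingHom.ker ((phiRM k m).rangeRestrict))
      ≃ₐ[k] (phiRM k m).range :=
    Ideal.quotientKerAlgEquivOfSurjective (phiRM k m).rangeRestrict_surjective
  exact e1.trans (e2.trans (Subalgebra.equivOfEq _ _ (range_phiRM k m)))
end

section
/- Let m >= 1 and let M, N be finitely generated Z-graded R_m-modules. Let f : M -> N be a graded k[x]-linear map (with k[x] embedded diagonally in R_m) such that the localized map f_x : M_x -> N_x is linear over (R_m)_x = k[x,x^{-1}] x k[x,x^{-1}]. Then for all sufficiently large n one has f(y^n a) = y^n f(a) for all a in M, where y = (x,0); equivalently, f is R_n-linear for all n >> 0. -/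
lemma sigma_sub' {N : ℤ → Type} [∀ d, AddCommGroup (N d)] {e1 e2 : ℤ}
    {x1 y1 : N e1} {x2 y2 : N e2}
    (hx : (⟨e1, x1⟩ : Σ d, N d) = ⟨e2, x2⟩) (hy : (⟨e1, y1⟩ : Σ d, N d) = ⟨e2, y2⟩) :
    (⟨e1, x1 - y1⟩ : Σ d, N d) = ⟨e2, x2 - y2⟩ := by
  obtain h1 : e1 = e2 := congrArg Sigma.fst hx
  subst h1
  obtain rfl : x1 = x2 := sigma_mk_injective hx
  obtain rfl : y1 = y2 := sigma_mk_injective hy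
  rfl

lemma iter_linear' {k : Type} [Field k] {N : ℤ → Type} [∀ d, AddCommGroup (N d)]
    [∀ d, Module k (N d)] (uN : ∀ d : ℤ, N d →ₗ[k] N (d + 1))
    (UN : (Σ d : ℤ, N d) → (Σ d : ℤ, N d))
    (hUN : ∀ p : Σ d : ℤ, N d, UN p = ⟨p.1 + 1, uN p.1 p.2⟩) (j : ℕ) (d : ℤ) :
    ∃ (e : ℤ) (g : N d →ₗ[k] N e), ∀ b : N d, UN^[j] ⟨d, b⟩ = ⟨e, g b⟩ := by
  induction j with
  | zero => exact ⟨d, LinearMap.id, fun b => rfl⟩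
  | succ j ih =>
    obtain ⟨e, g, hg⟩ := ih
    exact ⟨e + 1, (uN e).comp g, fun b => by
      rw [Function.iterate_succ_apply', hg b, hUN]; rfl⟩



/-!
STATEMENT 16: Let `m ≥ 1` and let `M, N` be finitely generated `ℤ`-graded `R_m`-modules,
where `R_m ⊆ k[x] × k[x]` is generated by `u = (x,x)` (degree 1) and `v = (x^m, 0)`
(degree `m`); recall `R_m ≅ k[u,v]/(v² - uᵐv)` and `k[x]` sits diagonally (`x = u`).
Let `f : M → N` be a graded `k[x]`-linear map whose localization `fₓ` is
`(R_m)ₓ = k[x,x⁻¹] × k[x,x⁻¹]`-linear.  Then `f(yⁿa) = yⁿf(a)` for all `n ≫ 0` and all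
`a ∈ M`, where `y = (x,0)`; equivalently `f` is `R_n`-linear for `n ≫ 0`.

Encoding: a graded `R_m`-module is a family `M : ℤ → Type` of `k`-vector spaces with the
action `uM d : M d →ₗ M (d+1)` of `u` and `vM d : M d →ₗ M (d+m)` of `v`, subject to
`u v = v u` and `v² = uᵐ v`; `UM`/`VM` denote the induced endomorphisms of `Σ d, M d`.
`fₓ` being `(R_m)ₓ`-linear amounts to `f(v·a) - v·f(a)` being `x`-torsion for every `a`
(since `(R_m)ₓ` is generated over `k[x,x⁻¹]` by `v`), and `yⁿ = v·u^(n-m)` for `n ≥ m`.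
-/

theorem eventually_y_linear (k : Type) [Field k] (m : ℕ) (hm : 1 ≤ m)
    (M : ℤ → Type) [∀ d, AddCommGroup (M d)] [∀ d, Module k (M d)]
    (N : ℤ → Type) [∀ d, AddCommGroup (N d)] [∀ d, Module k (N d)]
    (uM : ∀ d : ℤ, M d →ₗ[k] M (d + 1)) (vM : ∀ d : ℤ, M d →ₗ[k] M (d + m))
    (uN : ∀ d : ℤ, N d →ₗ[k] N (d + 1)) (vN : ∀ d : ℤ, N d →ₗ[k] N (d + m))
    (UM VM : (Σ d : ℤ, M d) → (Σ d : ℤ, M d))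
    (UN VN : (Σ d : ℤ, N d) → (Σ d : ℤ, N d))
    (hUM : ∀ p : Σ d : ℤ, M d, UM p = ⟨p.1 + 1, uM p.1 p.2⟩)
    (hVM : ∀ p : Σ d : ℤ, M d, VM p = ⟨p.1 + m, vM p.1 p.2⟩)
    (hUN : ∀ p : Σ d : ℤ, N d, UN p = ⟨p.1 + 1, uN p.1 p.2⟩)
    (hVN : ∀ p : Σ d : ℤ, N d, VN p = ⟨p.1 + m, vN p.1 p.2⟩)
    -- the `R_m`-module relations `uv = vu` and `v² = uᵐv` on `M` and on `N`:
    (hMuv : ∀ p, VM (UM p) = UM (VM p)) (hMvv : ∀ p, VM (VM p) = UM^[m] (VM p))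
    (hNuv : ∀ p, VN (UN p) = UN (VN p)) (hNvv : ∀ p, VN (VN p) = UN^[m] (VN p))
    -- `M` and `N` are finitely generated graded `R_m`-modules:
    (hMfg : ∃ s : Finset (Σ d : ℤ, M d), ∀ (d : ℤ) (a : M d),
      a ∈ Submodule.span k {y : M d | ∃ p ∈ s, ∃ n : ℕ,
        UM^[n] p = ⟨d, y⟩ ∨ UM^[n] (VM p) = ⟨d, y⟩})
    (hNfg : ∃ s : Finset (Σ d : ℤ, N d), ∀ (d : ℤ) (a : N d),
      a ∈ Submodule.span k {y : N d | ∃ p ∈ s, ∃ n : ℕ,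
        UN^[n] p = ⟨d, y⟩ ∨ UN^[n] (VN p) = ⟨d, y⟩})
    -- `f` is a graded `k[x]`-linear map:
    (f : ∀ d : ℤ, M d →ₗ[k] N d)
    (hfu : ∀ (d : ℤ) (a : M d), f (d + 1) (uM d a) = uN d (f d a))
    -- the localization of `f` at `x` is `k[x,x⁻¹] × k[x,x⁻¹]`-linear, i.e. the defect
    -- `f(v·a) - v·f(a)` is `x`-torsion for every `a`:
    (hloc : ∀ (d : ℤ) (a : M d), ∃ n : ℕ,
      (UN^[n] ⟨d + m, f (d + m) (vM d a) - vN d (f d a)⟩).2 = 0) :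
    -- conclusion: `f` commutes with `yⁿ = v·u^(n-m)` for all sufficiently large `n`,
    -- i.e. `f` is `R_n`-linear for `n ≫ 0`:
    ∃ n₀ : ℕ, ∀ n : ℕ, n₀ ≤ n → m ≤ n → ∀ (d : ℤ) (a : M d),
      (⟨_, f _ ((VM (UM^[n - m] ⟨d, a⟩)).2)⟩ : Σ d : ℤ, N d)
        = VN (UN^[n - m] ⟨d, f d a⟩) := by
  classical
  -- the defect of `f` against `v`, as a fiberwise linear map
  set D : ∀ d : ℤ, M d →ₗ[k] N (d + m) := fun d =>
    ((f (d + m)).comp (vM d)) - ((vN d).comp (f d)) with hD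
  have hDapp : ∀ (d : ℤ) (a : M d), D d a = f (d + m) (vM d a) - vN d (f d a) := by
    intro d a; simp [hD]
  set Dsig : (Σ d : ℤ, M d) → (Σ d : ℤ, N d) := fun q => ⟨q.1 + m, D q.1 q.2⟩ with hDsig
  set Fsig : (Σ d : ℤ, M d) → (Σ d : ℤ, N d) := fun q => ⟨q.1, f q.1 q.2⟩ with hFsig
  set kill : ℕ → (Σ d : ℤ, N d) → Prop := fun j q => (UN^[j] q).2 = 0 with hkill
  -- `Fsig` commutes with `u`
  have hFu : ∀ q, Fsig (UM q) = UN (Fsig q) := by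
    rintro ⟨d, a⟩
    rw [hUM, hUN]
    show (⟨d + 1, f (d + 1) (uM d a)⟩ : Σ d : ℤ, N d) = ⟨d + 1, uN d (f d a)⟩
    rw [hfu]
  have hFuIter : ∀ (j : ℕ) (q), Fsig (UM^[j] q) = UN^[j] (Fsig q) := by
    intro j
    induction j with
    | zero => intro q; rfl
    | succ j ih =>
      intro q
      rw [Function.iterate_succ_apply', Function.iterate_succ_apply', hFu, ih]
  -- `Dsig` commutes with `u`
  have hDu : ∀ q, Dsig (UM q) = UN (Dsig q) := by
    rintro ⟨d, a⟩
    have h1 := hMuv ⟨d, a⟩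
    rw [hUM ⟨d, a⟩, hVM, hVM ⟨d, a⟩, hUM] at h1
    have h1' : (⟨d + 1 + (m : ℤ), f (d + 1 + m) (vM (d + 1) (uM d a))⟩ : Σ d : ℤ, N d)
        = ⟨d + m + 1, f (d + m + 1) (uM (d + m) (vM d a))⟩ := congrArg Fsig h1
    rw [hfu (d + m)] at h1'
    have h2 := hNuv ⟨d, f d a⟩
    rw [hUN ⟨d, f d a⟩, hVN, hVN ⟨d, f d a⟩, hUN] at h2
    have h2' : (⟨d + 1 + (m : ℤ), vN (d + 1) (uN d (f d a))⟩ : Σ d : ℤ, N d)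
        = ⟨d + m + 1, uN (d + m) (vN d (f d a))⟩ := h2
    rw [hUM ⟨d, a⟩, hUN]
    show (⟨d + 1 + (m : ℤ), D (d + 1) (uM d a)⟩ : Σ d : ℤ, N d)
        = ⟨d + m + 1, uN (d + m) (D d a)⟩
    rw [hDapp, hDapp, map_sub, hfu d]
    exact sigma_sub' h1' h2'
  have hDuIter : ∀ (j : ℕ) (q), Dsig (UM^[j] q) = UN^[j] (Dsig q) := by
    intro j
    induction j with
    | zero => intro q; rfl
    | succ j ih =>
      intro q
      rw [Function.iterate_succ_apply', Function.iterate_succ_apply', hDu, ih]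
  -- properties of the `kill` predicate
  have kill_mono : ∀ (j j' : ℕ) (q), j ≤ j' → kill j q → kill j' q := by
    intro j j' q hle hk
    have hk' : (UN^[j] q).2 = 0 := hk
    have hq : UN^[j] q = ⟨(UN^[j] q).1, 0⟩ := by
      conv_lhs => rw [← Sigma.eta (UN^[j] q)]
      rw [hk']
    obtain ⟨e, g, hg⟩ := iter_linear' uN UN hUN (j' - j) ((UN^[j] q).1)
    show (UN^[j'] q).2 = 0
    rw [show j' = (j' - j) + j by omega, Function.iterate_add_apply, hq, hg]
    simp
  have hUVN : ∀ (j : ℕ) (q), UN^[j] (VN q) = VN (UN^[j] q) := by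
    intro j
    induction j with
    | zero => intro q; rfl
    | succ j ih =>
      intro q
      rw [Function.iterate_succ_apply', Function.iterate_succ_apply', ih, hNuv]
  have kill_UNiter : ∀ (j i : ℕ) (q), kill j q → kill j (UN^[i] q) := by
    intro j i q hk
    show (UN^[j] (UN^[i] q)).2 = 0
    rw [← Function.iterate_add_apply]
    exact kill_mono j (j + i) q (by omega) hk
  have kill_VN : ∀ (j : ℕ) (q), kill j q → kill j (VN q) := by
    intro j q hk
    have hk' : (UN^[j] q).2 = 0 := hk
    have hq : UN^[j] q = ⟨(UN^[j] q).1, 0⟩ := by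
      conv_lhs => rw [← Sigma.eta (UN^[j] q)]
      rw [hk']
    show (UN^[j] (VN q)).2 = 0
    rw [hUVN, hq, hVN]
    simp
  have kill_sub : ∀ (j : ℕ) (e : ℤ) (x y : N e),
      kill j ⟨e, x⟩ → kill j ⟨e, y⟩ → kill j ⟨e, x - y⟩ := by
    intro j e x y hx hy
    obtain ⟨e', g, hg⟩ := iter_linear' uN UN hUN j e
    have hx' : g x = 0 := by
      have h : (UN^[j] (⟨e, x⟩ : Σ d : ℤ, N d)).2 = 0 := hx
      rw [hg] at h; exact h
    have hy' : g y = 0 := by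
      have h : (UN^[j] (⟨e, y⟩ : Σ d : ℤ, N d)).2 = 0 := hy
      rw [hg] at h; exact h
    show (UN^[j] (⟨e, x - y⟩ : Σ d : ℤ, N d)).2 = 0
    rw [hg]
    show g (x - y) = 0
    rw [map_sub, hx', hy', sub_zero]
  -- the defect of `v·q` is killed whenever the defect of `q` is
  have hDvKill : ∀ (j : ℕ) (q), kill j (Dsig q) → kill j (Dsig (VM q)) := by
    rintro j ⟨d, a⟩ hk
    obtain ⟨e, g, hg⟩ := iter_linear' uN UN hUN m (d + m)
    set b : N (d + m) := vN d (f d a) with hb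
    set c : N (d + m) := D d a with hc
    have hbc : f (d + m) (vM d a) = b + c := by rw [hb, hc, hDapp]; abel
    have h1' : Fsig (VM (VM ⟨d, a⟩)) = UN^[m] (Fsig (VM ⟨d, a⟩)) := by
      rw [congrArg Fsig (hMvv ⟨d, a⟩), hFuIter]
    rw [hVM ⟨d, a⟩] at h1'
    rw [hVM] at h1'
    have h1'' : (⟨d + m + m, f (d + m + m) (vM (d + m) (vM d a))⟩ : Σ d : ℤ, N d)
        = UN^[m] (⟨d + m, f (d + m) (vM d a)⟩ : Σ d : ℤ, N d) := h1'
    rw [hbc, hg (b + c), map_add] at h1''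
    have h2 := hNvv ⟨d, f d a⟩
    rw [hVN ⟨d, f d a⟩] at h2
    rw [hVN] at h2
    have h3 : (⟨d + m + m, vN (d + m) b⟩ : Σ d : ℤ, N d)
        = UN^[m] (⟨d + m, b⟩ : Σ d : ℤ, N d) := h2
    rw [hg b] at h3
    have hA := sigma_sub' h1'' h3
    rw [add_sub_cancel_left] at hA
    have hgoal : Dsig (VM ⟨d, a⟩)
        = ⟨d + m + m, (f (d + m + m) (vM (d + m) (vM d a)) - vN (d + m) b) - vN (d + m) c⟩ := by
      rw [hVM ⟨d, a⟩]
      show (⟨d + m + m, D (d + m) (vM d a)⟩ : Σ d : ℤ, N d) = _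
      rw [hDapp, hbc, map_add, sub_add_eq_sub_sub]
    rw [hgoal]
    apply kill_sub
    · rw [hA]
      have heq : (⟨e, g c⟩ : Σ d : ℤ, N d) = UN^[m] (Dsig ⟨d, a⟩) := (hg c).symm
      rw [heq]
      exact kill_UNiter j m _ hk
    · have heq : (⟨d + m + m, vN (d + m) c⟩ : Σ d : ℤ, N d) = VN (Dsig ⟨d, a⟩) := by
        rw [hVN (Dsig ⟨d, a⟩)]
      rw [heq]
      exact kill_VN j _ hk
  -- each defect is killed by some power of `u`
  have hlocall : ∀ q : Σ d : ℤ, M d, ∃ n : ℕ, kill n (Dsig q) := by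
    rintro ⟨d, a⟩
    obtain ⟨n, hn⟩ := hloc d a
    refine ⟨n, ?_⟩
    show (UN^[n] ⟨d + m, D d a⟩).2 = 0
    rw [hDapp]
    exact hn
  obtain ⟨s, hs⟩ := hMfg
  set F : (Σ d : ℤ, M d) → ℕ := fun p => (hlocall p).choose with hF
  set k₀ : ℕ := s.sup F with hk₀
  have hgen : ∀ p ∈ s, kill k₀ (Dsig p) :=
    fun p hp => kill_mono _ _ _ (Finset.le_sup hp) (hlocall p).choose_spec
  -- all defects are killed by `u^[k₀]`
  have hall : ∀ q : Σ d : ℤ, M d, kill k₀ (Dsig q) := by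
    rintro ⟨d, a⟩
    obtain ⟨e, g, hg⟩ := iter_linear' uN UN hUN k₀ (d + m)
    show (UN^[k₀] ⟨d + m, D d a⟩).2 = 0
    rw [hg]
    show g (D d a) = 0
    have hsub : Submodule.span k {y : M d | ∃ p ∈ s, ∃ n : ℕ,
        UM^[n] p = ⟨d, y⟩ ∨ UM^[n] (VM p) = ⟨d, y⟩} ≤ LinearMap.ker (g.comp (D d)) := by
      rw [Submodule.span_le]
      rintro y ⟨p, hp, n, h⟩
      have hky : kill k₀ (Dsig ⟨d, y⟩) := by
        rcases h with h | h
        · rw [← h, hDuIter]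
          exact kill_UNiter k₀ n _ (hgen p hp)
        · rw [← h, hDuIter]
          exact kill_UNiter k₀ n _ (hDvKill k₀ p (hgen p hp))
      have hky' : (UN^[k₀] (⟨d + m, D d y⟩ : Σ d : ℤ, N d)).2 = 0 := hky
      rw [hg] at hky'
      simp only [SetLike.mem_coe, LinearMap.mem_ker, LinearMap.comp_apply]
      exact hky'
    have hmem := hsub (hs d a)
    rw [LinearMap.mem_ker, LinearMap.comp_apply] at hmem
    exact hmem
  -- conclusion
  refine ⟨k₀ + m, fun n hn hmn d a => ?_⟩
  obtain ⟨e, b, hr⟩ : ∃ (e : ℤ) (b : M e), UM^[n - m] (⟨d, a⟩ : Σ d : ℤ, M d) = ⟨e, b⟩ :=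
    ⟨_, _, (Sigma.eta _).symm⟩
  have h1 : kill (n - m) (Dsig ⟨d, a⟩) :=
    kill_mono k₀ (n - m) _ (by omega) (hall ⟨d, a⟩)
  have h2 : Dsig (⟨e, b⟩ : Σ d : ℤ, M d) = UN^[n - m] (Dsig ⟨d, a⟩) := by
    rw [← hr, hDuIter]
  have h3 : D e b = 0 := by
    have h : (Dsig (⟨e, b⟩ : Σ d : ℤ, M d)).2 = 0 := by rw [h2]; exact h1
    exact h
  have h4 : f (e + m) (vM e b) = vN e (f e b) := by
    rw [hDapp] at h3
    exact sub_eq_zero.mp h3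
  have h5 : UN^[n - m] (⟨d, f d a⟩ : Σ d : ℤ, N d) = ⟨e, f e b⟩ := by
    have h := hFuIter (n - m) ⟨d, a⟩
    rw [hr] at h
    exact h.symm
  rw [hr, hVM ⟨e, b⟩]
  show (⟨e + m, f (e + m) (vM e b)⟩ : Σ d : ℤ, N d) = VN (UN^[n - m] ⟨d, f d a⟩)
  rw [h5, hVN ⟨e, f e b⟩, h4]
end
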